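/- Let X ∈ ℝ^{n×p}, y ∈ ℝ^n, let h : ℝ^p → ℝ be convex and nonnegative, let λ ≥ 0, and define p(w) = (1/2)‖Xw−y‖² and f(w) = p(w) + λh(w). Let Δ ∈ ℝ^{n×n} be a symmetric matrix with −εI_n ⪯ Δ ⪯ εI_n for some ε ≥ 0. Then for all w₁, w₂, w₃ ∈ ℝ^p, ⟨X^⊤Δ(Xw₁ − y), w₂ − w₃⟩ ≤ ε(4p(w₁) + 3p(w₂) + 3p(w₃)) ≤ ε(4f(w₁) + 3f(w₂) + 3f(w₃)). -/
import Mathlib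


open Matrix

noncomputable section

namespace Stmt19

/-- `p(w) = (1/2)‖Xw − y‖²`. -/
def pObj {n p : ℕ} (X : Matrix (Fin n) (Fin p) ℝ) (y : Fin n → ℝ)
    (w : Fin p → ℝ) : ℝ :=
  (1 / 2) * ((X *ᵥ w - y) ⬝ᵥ (X *ᵥ w - y))

/-- `f(w) = p(w) + λ h(w)`. -/
def objF {n p : ℕ} (X : Matrix (Fin n) (Fin p) ℝ) (y : Fin n → ℝ) (lam : ℝ)
    (h : (Fin p → ℝ) → ℝ) (w : Fin p → ℝ) : ℝ :=
  pObj X y w + lam * h w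

/-- the key perturbation estimate in the analysis of encoded
proximal gradient: if `Δ` is symmetric with `−εI ⪯ Δ ⪯ εI`, then
`⟨XᵀΔ(Xw₁ − y), w₂ − w₃⟩ ≤ ε(4p(w₁) + 3p(w₂) + 3p(w₃))
  ≤ ε(4f(w₁) + 3f(w₂) + 3f(w₃))`. -/
theorem encoding_perturbation_bound
    {n p : ℕ}
    (X : Matrix (Fin n) (Fin p) ℝ) (y : Fin n → ℝ)
    (h : (Fin p → ℝ) → ℝ) (lam ε : ℝ)
    (Δ : Matrix (Fin n) (Fin n) ℝ)
    (hε : 0 ≤ ε)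
    -- h is convex and nonnegative, λ ≥ 0
    (hconv : ConvexOn ℝ Set.univ h) (hh : ∀ v, 0 ≤ h v) (hlam : 0 ≤ lam)
    -- Δ is symmetric with −εI ⪯ Δ ⪯ εI
    (hΔsymm : Δ.IsSymm)
    (hΔlow : ∀ z : Fin n → ℝ, -ε * (z ⬝ᵥ z) ≤ z ⬝ᵥ (Δ *ᵥ z))
    (hΔup : ∀ z : Fin n → ℝ, z ⬝ᵥ (Δ *ᵥ z) ≤ ε * (z ⬝ᵥ z)) :
    ∀ w1 w2 w3 : Fin p → ℝ,
      (Xᵀ *ᵥ (Δ *ᵥ (X *ᵥ w1 - y))) ⬝ᵥ (w2 - w3) ≤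
          ε * (4 * pObj X y w1 + 3 * pObj X y w2 + 3 * pObj X y w3) ∧
        ε * (4 * pObj X y w1 + 3 * pObj X y w2 + 3 * pObj X y w3) ≤
          ε * (4 * objF X y lam h w1 + 3 * objF X y lam h w2 +
            3 * objF X y lam h w3) := by
  have dotProduct_self_nonneg : ∀ v : Fin n → ℝ, 0 ≤ v ⬝ᵥ v := fun v =>
    Finset.sum_nonneg fun i _ => mul_self_nonneg (v i)
  -- bilinear bound: a ⬝ᵥ Δ b ≤ (ε/2)(‖a‖² + ‖b‖²)
  have bil : ∀ a b : Fin n → ℝ,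
      a ⬝ᵥ (Δ *ᵥ b) ≤ ε / 2 * (a ⬝ᵥ a + b ⬝ᵥ b) := by
    intro a b
    have hsym : b ⬝ᵥ (Δ *ᵥ a) = a ⬝ᵥ (Δ *ᵥ b) := by
      rw [dotProduct_mulVec, ← mulVec_transpose, hΔsymm.eq, dotProduct_comm]
    have h1 := hΔup (a + b)
    have h2 := hΔlow (a - b)
    simp only [mulVec_add, mulVec_sub, dotProduct_add, dotProduct_sub,
      add_dotProduct, sub_dotProduct] at h1 h2
    nlinarith [h1, h2, hsym]
  intro w1 w2 w3
  set r1 := X *ᵥ w1 - y with hr1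
  set r2 := X *ᵥ w2 - y with hr2
  set r3 := X *ᵥ w3 - y with hr3
  have hlhs : (Xᵀ *ᵥ (Δ *ᵥ r1)) ⬝ᵥ (w2 - w3) = r1 ⬝ᵥ (Δ *ᵥ (r2 - r3)) := by
    have h1 : (Xᵀ *ᵥ (Δ *ᵥ r1)) ⬝ᵥ (w2 - w3)
        = (Δ *ᵥ r1) ⬝ᵥ (X *ᵥ (w2 - w3)) := by
      rw [mulVec_transpose, ← dotProduct_mulVec]
    have h2 : X *ᵥ (w2 - w3) = r2 - r3 := by
      rw [hr2, hr3, mulVec_sub]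
      abel
    rw [h1, h2, dotProduct_mulVec, ← mulVec_transpose, hΔsymm.eq, dotProduct_comm]
  have key := bil r1 (r2 - r3)
  have hexp : (r2 - r3) ⬝ᵥ (r2 - r3)
      = r2 ⬝ᵥ r2 - 2 * (r2 ⬝ᵥ r3) + r3 ⬝ᵥ r3 := by
    simp only [dotProduct_sub, sub_dotProduct]
    rw [dotProduct_comm r3 r2]
    ring
  have hpos : 0 ≤ (r2 + r3) ⬝ᵥ (r2 + r3) := dotProduct_self_nonneg _
  have hpos' : (r2 + r3) ⬝ᵥ (r2 + r3)
      = r2 ⬝ᵥ r2 + 2 * (r2 ⬝ᵥ r3) + r3 ⬝ᵥ r3 := by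
    simp only [dotProduct_add, add_dotProduct]
    rw [dotProduct_comm r3 r2]
    ring
  have h11 : 0 ≤ r1 ⬝ᵥ r1 := dotProduct_self_nonneg _
  have h22 : 0 ≤ r2 ⬝ᵥ r2 := dotProduct_self_nonneg _
  have h33 : 0 ≤ r3 ⬝ᵥ r3 := dotProduct_self_nonneg _
  constructor
  · rw [hlhs]
    simp only [pObj, ← hr1, ← hr2, ← hr3]
    nlinarith [key, hexp, hpos, hpos', h11, h22, h33, hε]
  · have hf : ∀ w : Fin p → ℝ, pObj X y w ≤ objF X y lam h w := by
      intro w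
      have := mul_nonneg hlam (hh w)
      simp only [objF]
      linarith
    have := hf w1; have := hf w2; have := hf w3
    nlinarith [hf w1, hf w2, hf w3, hε]

end Stmt19
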